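/- Let n ≥ 1, let A be a symmetric linear endomorphism of EuclideanSpace ℝ (Fin n), and let v be a nonzero vector. Let P denote the orthogonal projection onto the orthogonal complement v^⊥ of v, and let S : v^⊥ → v^⊥ be the symmetric endomorphism S(w) := (1/‖v‖) · P(A(w)); let κ_1, …, κ_{n−1} be the eigenvalues of S counted with multiplicity. Then for every 0 ≤ r ≤ n−1: the r-th elementary symmetric polynomial of (κ_1, …, κ_{n−1}) equals ⟨T_r(A) v, v⟩ / ‖v‖^{r+2}. (This is the pointwise linear-algebraic content of Lemma 2.2: S is the shape operator of the level set of a function with gradient v and Hessian A, and its eigenvalues are the principal curvatures.) -/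

import Mathlib

open scoped RealInnerProductSpace

open Polynomial Finset Matrix

noncomputable section


/-- elementary symmetric polynomial of `d` restricted to a finset `s`. -/
def esymmOn {m : ℕ} (s : Finset (Fin m)) (d : Fin m → ℝ) (k : ℕ) : ℝ :=
  ∑ t ∈ Finset.powersetCard k s, ∏ j ∈ t, d j

lemma esymmOn_zero {m : ℕ} (s : Finset (Fin m)) (d : Fin m → ℝ) : esymmOn s d 0 = 1 := by
  simp [esymmOn]

lemma esymmOn_split' {m : ℕ} (d : Fin m → ℝ) (i : Fin m) (s : Finset (Fin m))
    (hnotmem : i ∉ s) (k : ℕ) :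
    esymmOn (insert i s) d (k+1) = esymmOn s d (k+1) + d i * esymmOn s d k := by
  classical
  have hdisj : Disjoint (Finset.powersetCard (k+1) s)
      ((Finset.powersetCard k s).image (insert i)) := by
    rw [Finset.disjoint_left]
    intro t ht1 ht2
    obtain ⟨t', ht', rfl⟩ := Finset.mem_image.mp ht2
    have h2 : insert i t' ⊆ s := (Finset.mem_powersetCard.mp ht1).1
    exact hnotmem (h2 (Finset.mem_insert_self i t'))
  rw [esymmOn, Finset.powersetCard_succ_insert hnotmem, Finset.sum_union hdisj,
    Finset.sum_image]
  · rw [esymmOn, esymmOn, Finset.mul_sum]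
    congr 1
    refine Finset.sum_congr rfl fun t ht => ?_
    have hit : i ∉ t := fun hc =>
      hnotmem ((Finset.mem_powersetCard.mp ht).1 hc)
    rw [Finset.prod_insert hit]
  · intro t1 ht1 t2 ht2 hins
    have hi1 : i ∉ t1 := fun hc => hnotmem ((Finset.mem_powersetCard.mp ht1).1 hc)
    have hi2 : i ∉ t2 := fun hc => hnotmem ((Finset.mem_powersetCard.mp ht2).1 hc)
    have := congrArg (fun s => Finset.erase s i) hins
    simpa [Finset.erase_insert hi1, Finset.erase_insert hi2] using this

lemma esymmOn_split {m : ℕ} (d : Fin m → ℝ) (i : Fin m) (k : ℕ) :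
    esymmOn Finset.univ d (k+1)
      = esymmOn (Finset.univ.erase i) d (k+1) + d i * esymmOn (Finset.univ.erase i) d k := by
  have h := esymmOn_split' d i (Finset.univ.erase i) (Finset.notMem_erase _ _) k
  rwa [Finset.insert_erase (Finset.mem_univ i)] at h

lemma coeff_prod_X_sub_C {m : ℕ} (s : Finset (Fin m)) (d : Fin m → ℝ) {k : ℕ}
    (h : k ≤ s.card) :
    (∏ i ∈ s, (X - C (d i))).coeff k
      = (-1) ^ (s.card - k) * esymmOn s d (s.card - k) := by
  classical
  have hcard : Multiset.card (s.val.map d) = s.card := by simp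
  have := Multiset.prod_X_sub_C_coeff (s.val.map d) (k := k) (by rw [hcard]; exact h)
  rw [hcard] at this
  rw [Finset.esymm_map_val] at this
  have hl : (Multiset.map (fun t => X - C t) (s.val.map d)).prod
      = ∏ i ∈ s, (X - C (d i)) := by
    rw [Multiset.map_map]
    rfl
  rw [hl] at this
  rw [this, esymmOn]

lemma coeff_prod_X_sub_C_zero {m : ℕ} (s : Finset (Fin m)) (d : Fin m → ℝ) {k : ℕ}
    (h : s.card < k) :
    (∏ i ∈ s, (X - C (d i))).coeff k = 0 := by
  apply Polynomial.coeff_eq_zero_of_natDegree_lt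
  calc (∏ i ∈ s, (X - C (d i))).natDegree ≤ ∑ i ∈ s, (X - C (d i)).natDegree :=
        Polynomial.natDegree_prod_le _ _
    _ = s.card := by simp [Polynomial.natDegree_X_sub_C]
    _ < k := h

lemma my_eval_charpoly {ι : Type*} [DecidableEq ι] [Fintype ι] (M : Matrix ι ι ℝ) (t : ℝ) :
    M.charpoly.eval t = (Matrix.diagonal (fun _ => t) - M).det := by
  rw [Matrix.charpoly, ← Polynomial.coe_evalRingHom, RingHom.map_det]
  congr 1
  ext i j
  by_cases h : i = j <;>
    simp [h, Matrix.charmatrix_apply_eq, Matrix.charmatrix_apply_ne, Matrix.diagonal_apply,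
      Matrix.sub_apply]

lemma arrowhead_charpoly {m : ℕ} (a : ℝ) (c d : Fin m → ℝ) :
    (Matrix.fromBlocks (Matrix.of fun _ _ : Unit => a) (Matrix.of fun _ j => c j)
        (Matrix.of fun i _ => c i) (Matrix.diagonal d)).charpoly
      = (X - C a) * ∏ i, (X - C (d i))
        - ∑ i, C (c i ^ 2) * ∏ j ∈ Finset.univ.erase i, (X - C (d j)) := by
  classical
  apply Polynomial.eq_of_infinite_eval_eq
  apply Set.Infinite.mono (s := (Set.range d)ᶜ)
  swap
  · exact (Set.finite_range d).infinite_compl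
  intro t ht
  have h : ∀ i, t ≠ d i := fun i hi => ht ⟨i, hi.symm⟩
  have hne : ∀ i, t - d i ≠ 0 := fun i => sub_ne_zero.mpr (h i)
  show _ = _
  rw [my_eval_charpoly]
  -- identify the matrix
  have hmat : (Matrix.diagonal (fun _ => t)
      - Matrix.fromBlocks (Matrix.of fun _ _ : Unit => a) (Matrix.of fun _ j => c j)
        (Matrix.of fun i _ => c i) (Matrix.diagonal d))
      = Matrix.fromBlocks (Matrix.of fun _ _ : Unit => t - a) (Matrix.of fun _ j => -c j)
        (Matrix.of fun i _ => -c i) (Matrix.diagonal fun i => t - d i) := by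
    ext (i | i) (j | j) <;>
      simp [Matrix.diagonal_apply, Matrix.sub_apply, Matrix.diagonal_apply_ne,
        Finset.sum_ite_eq] <;> by_cases hij : i = j <;> simp [hij]
  rw [hmat]
  letI : Invertible (fun i => t - d i : Fin m → ℝ) :=
    ⟨fun i => (t - d i)⁻¹, by funext i; exact inv_mul_cancel₀ (hne i),
      by funext i; exact mul_inv_cancel₀ (hne i)⟩
  letI : Invertible (Matrix.diagonal fun i => t - d i) := Matrix.diagonalInvertible _
  rw [Matrix.det_fromBlocks₂₂]
  have hinv : ⅟(Matrix.diagonal fun i => t - d i) = Matrix.diagonal fun i => (t - d i)⁻¹ := by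
    rw [Matrix.invOf_diagonal_eq]
    rfl
  rw [hinv]
  rw [Matrix.det_diagonal, Matrix.det_unique]
  -- compute the 1×1 entry
  have hentry : ((Matrix.of fun _ _ : Unit => t - a)
      - (Matrix.of fun (_ : Unit) j => -c j) * Matrix.diagonal (fun i => (t - d i)⁻¹)
        * (Matrix.of fun i (_ : Unit) => -c i)) default default
      = (t - a) - ∑ i, c i ^ 2 * (t - d i)⁻¹ := by
    simp [Matrix.sub_apply, Matrix.mul_apply, Matrix.diagonal_apply, Finset.sum_ite_eq,
      Finset.mul_sum]
    congr 1
    funext i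
    ring
  rw [hentry]
  -- evaluate the RHS polynomial
  simp only [eval_sub, eval_mul, eval_X, eval_C, eval_prod, eval_finset_sum, eval_pow]
  rw [mul_sub, Finset.mul_sum]
  congr 1
  · ring
  refine Finset.sum_congr rfl fun i _ => ?_
  have hprod : ∏ j, (t - d j) = (t - d i) * ∏ j ∈ Finset.univ.erase i, (t - d j) :=
    (Finset.mul_prod_erase _ _ (Finset.mem_univ i)).symm
  rw [hprod]
  have hx : (t - d i) * (t - d i)⁻¹ = 1 := mul_inv_cancel₀ (hne i)
  linear_combination (∏ x ∈ Finset.univ.erase i, (t - d x)) * c i ^ 2 * hx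

section
variable {m : ℕ} (a : ℝ) (c d : Fin m → ℝ)

lemma card_univ_fin : (Finset.univ : Finset (Fin m)).card = m := by simp

lemma card_erase_fin (i : Fin m) : ((Finset.univ : Finset (Fin m)).erase i).card = m - 1 := by
  rw [Finset.card_erase_of_mem (Finset.mem_univ i), card_univ_fin]

lemma arrow_coeff_general (k : ℕ) :
    ((X - C a) * ∏ i, (X - C (d i))
        - ∑ i, C (c i ^ 2) * ∏ j ∈ Finset.univ.erase i, (X - C (d j))).coeff (k + 1)
      = (∏ i, (X - C (d i))).coeff k - a * (∏ i, (X - C (d i))).coeff (k + 1)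
        - ∑ i, c i ^ 2 * (∏ j ∈ Finset.univ.erase i, (X - C (d j))).coeff (k + 1) := by
  rw [Polynomial.coeff_sub, sub_mul, Polynomial.coeff_sub, Polynomial.coeff_X_mul,
    Polynomial.coeff_C_mul, Polynomial.finset_sum_coeff]
  congr 1
  refine Finset.sum_congr rfl fun i _ => ?_
  rw [Polynomial.coeff_C_mul]

lemma sigma1_coeff (h : 1 ≤ m) :
    (-1 : ℝ) ^ (1 : ℕ) * ((X - C a) * ∏ i, (X - C (d i))
        - ∑ i, C (c i ^ 2) * ∏ j ∈ Finset.univ.erase i, (X - C (d j))).coeff (m + 1 - 1)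
      = esymmOn Finset.univ d 1 + a := by
  obtain ⟨k, rfl⟩ : ∃ k, m = k + 1 := ⟨m - 1, by omega⟩
  have hidx : k + 1 + 1 - 1 = k + 1 := by omega
  rw [hidx, arrow_coeff_general]
  have h1 : (∏ i, (X - C (d i))).coeff k = (-1 : ℝ) ^ 1 * esymmOn Finset.univ d 1 := by
    have := coeff_prod_X_sub_C (Finset.univ : Finset (Fin (k+1))) d
      (k := k) (by rw [card_univ_fin]; omega)
    rw [card_univ_fin, show k + 1 - k = 1 by omega] at this
    rw [this]
  have h2 : (∏ i, (X - C (d i))).coeff (k + 1) = 1 := by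
    have := coeff_prod_X_sub_C (Finset.univ : Finset (Fin (k+1))) d
      (k := k + 1) (by rw [card_univ_fin])
    rw [card_univ_fin] at this
    simpa [esymmOn_zero] using this
  have h3 : ∀ i : Fin (k+1),
      (∏ j ∈ Finset.univ.erase i, (X - C (d j))).coeff (k + 1) = 0 := fun i =>
    coeff_prod_X_sub_C_zero _ _ (by rw [card_erase_fin]; omega)
  rw [h1, h2]
  rw [Finset.sum_congr rfl fun i _ => by rw [h3 i, mul_zero]]
  simp
  ring

lemma sigma2_coeff (s : ℕ) (h : s + 2 ≤ m) :
    (-1 : ℝ) ^ (s + 2) * ((X - C a) * ∏ i, (X - C (d i))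
        - ∑ i, C (c i ^ 2) * ∏ j ∈ Finset.univ.erase i, (X - C (d j))).coeff (m + 1 - (s + 2))
      = esymmOn Finset.univ d (s + 2) + a * esymmOn Finset.univ d (s + 1)
        - ∑ i, c i ^ 2 * esymmOn (Finset.univ.erase i) d s := by
  obtain ⟨j, rfl⟩ : ∃ j, m = j + s + 2 := ⟨m - s - 2, by omega⟩
  have hidx : j + s + 2 + 1 - (s + 2) = j + 1 := by omega
  rw [hidx, arrow_coeff_general]
  have h1 : (∏ i, (X - C (d i))).coeff j
      = (-1 : ℝ) ^ (s + 2) * esymmOn Finset.univ d (s + 2) := by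
    have := coeff_prod_X_sub_C (Finset.univ : Finset (Fin (j+s+2))) d
      (k := j) (by rw [card_univ_fin]; omega)
    rw [card_univ_fin, show j + s + 2 - j = s + 2 by omega] at this
    rw [this]
  have h2 : (∏ i, (X - C (d i))).coeff (j + 1)
      = (-1 : ℝ) ^ (s + 1) * esymmOn Finset.univ d (s + 1) := by
    have := coeff_prod_X_sub_C (Finset.univ : Finset (Fin (j+s+2))) d
      (k := j + 1) (by rw [card_univ_fin]; omega)
    rw [card_univ_fin, show j + s + 2 - (j + 1) = s + 1 by omega] at this
    rw [this]
  have h3 : ∀ i : Fin (j+s+2),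
      (∏ t ∈ Finset.univ.erase i, (X - C (d t))).coeff (j + 1)
        = (-1 : ℝ) ^ s * esymmOn (Finset.univ.erase i) d s := by
    intro i
    have := coeff_prod_X_sub_C (Finset.univ.erase i) d
      (k := j + 1) (by rw [card_erase_fin]; omega)
    rw [card_erase_fin, show j + s + 2 - 1 - (j + 1) = s by omega] at this
    rw [this]
  rw [h1, h2]
  rw [Finset.sum_congr rfl fun i _ => by rw [h3 i]]
  have hsum : ∑ i : Fin (j+s+2), c i ^ 2 * ((-1 : ℝ) ^ s * esymmOn (Finset.univ.erase i) d s)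
      = (-1 : ℝ) ^ s * ∑ i, c i ^ 2 * esymmOn (Finset.univ.erase i) d s := by
    rw [Finset.mul_sum]
    exact Finset.sum_congr rfl fun i _ => by ring
  rw [hsum]
  have ht : ((-1 : ℝ) ^ s) * ((-1 : ℝ) ^ s) = 1 := by
    rw [← pow_add, ← two_mul, pow_mul]
    norm_num
  have hp1 : ((-1 : ℝ)) ^ (s + 1) = (-1 : ℝ) ^ s * (-1) := pow_succ _ _
  have hp2 : ((-1 : ℝ)) ^ (s + 2) = (-1 : ℝ) ^ s * 1 := by
    rw [pow_add]
    norm_num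
  rw [hp1, hp2]
  linear_combination (esymmOn Finset.univ d (s + 2) + a * esymmOn Finset.univ d (s + 1)
    - ∑ i, c i ^ 2 * esymmOn (Finset.univ.erase i) d s) * ht

end

/-- The core Newton-recursion induction, in purely scalar form. -/
lemma newton_core {m : ℕ} (a : ℝ) (c d : Fin m → ℝ) (σ x : ℕ → ℝ) (y : ℕ → Fin m → ℝ)
    (hx0 : x 0 = 1) (hy0 : ∀ i, y 0 i = 0)
    (hx : ∀ r, x (r + 1) = σ (r + 1) - (a * x r + ∑ i, c i * y r i))
    (hy : ∀ r i, y (r + 1) i = -(c i * x r + d i * y r i))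
    (hσ1 : 1 ≤ m → σ 1 = esymmOn Finset.univ d 1 + a)
    (hσ2 : ∀ s, s + 2 ≤ m → σ (s + 2) = esymmOn Finset.univ d (s + 2)
      + a * esymmOn Finset.univ d (s + 1)
      - ∑ i, c i ^ 2 * esymmOn (Finset.univ.erase i) d s) :
    ∀ r, r ≤ m → x r = esymmOn Finset.univ d r
      ∧ ∀ i, y r i = -(c i * (Nat.casesOn r (0:ℝ) fun k => esymmOn (Finset.univ.erase i) d k)) := by
  intro r
  induction r with
  | zero =>
    intro _
    refine ⟨by rw [hx0, esymmOn_zero], fun i => by simp [hy0 i]⟩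
  | succ r ih =>
    intro hrm
    obtain ⟨ihx, ihy⟩ := ih (by omega)
    constructor
    · rw [hx r, ihx]
      have hsum : ∑ i, c i * y r i
          = -(∑ i, c i ^ 2 * (Nat.casesOn r (0:ℝ) fun k => esymmOn (Finset.univ.erase i) d k)) := by
        rw [← Finset.sum_neg_distrib]
        refine Finset.sum_congr rfl fun i _ => ?_
        rw [ihy i]
        ring
      rw [hsum]
      cases r with
      | zero =>
        rw [hσ1 (by omega), esymmOn_zero]
        simp
      | succ s =>
        rw [hσ2 s (by omega)]
        ring
    · intro i
      rw [hy r i, ihx, ihy i]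
      cases r with
      | zero =>
        show -(c i * esymmOn Finset.univ d 0 + d i * -(c i * 0))
            = -(c i * esymmOn (Finset.univ.erase i) d 0)
        rw [esymmOn_zero, esymmOn_zero]
        ring
      | succ s =>
        have := esymmOn_split d i s
        have hgoal : esymmOn (Finset.univ.erase i) d (s + 1)
            = esymmOn Finset.univ d (s + 1) - d i * esymmOn (Finset.univ.erase i) d s := by
          rw [this]; ring
        show -(c i * esymmOn Finset.univ d (s+1) + d i * -(c i * esymmOn (Finset.univ.erase i) d s))
            = -(c i * esymmOn (Finset.univ.erase i) d (s+1))
        rw [hgoal]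
        ring



/-- `σ_i(A)` for an endomorphism `A` of `EuclideanSpace ℝ (Fin n)`, defined by the
characteristic polynomial expansion `det(λ I − A) = ∑ (−1)^i σ_i(A) λ^{n−i}`. -/
def endoSigma (n : ℕ)
    (A : EuclideanSpace ℝ (Fin n) →ₗ[ℝ] EuclideanSpace ℝ (Fin n)) (i : ℕ) : ℝ :=
  (-1 : ℝ) ^ i * (LinearMap.charpoly A).coeff (n - i)

/-- Newton operators `T_0 = I`, `T_r = σ_r(A)·I − T_{r−1}(A) ∘ A`. -/
def endoNewton (n : ℕ)
    (A : EuclideanSpace ℝ (Fin n) →ₗ[ℝ] EuclideanSpace ℝ (Fin n)) :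
    ℕ → (EuclideanSpace ℝ (Fin n) →ₗ[ℝ] EuclideanSpace ℝ (Fin n))
  | 0 => LinearMap.id
  | r + 1 => endoSigma n A (r + 1) • LinearMap.id - (endoNewton n A r).comp A

/-- pointwise content of Lemma 2.2: if `S` is the shape-operator-type
symmetric endomorphism `w ↦ (1/‖v‖) P(A w)` of `v^⊥`, with eigenvalues `κ_1, …, κ_{n−1}`
(counted with multiplicity, i.e. realized by an orthonormal eigenbasis), then the `r`-th
elementary symmetric polynomial of the `κ_i` equals `⟨T_r(A) v, v⟩ / ‖v‖^{r+2}`. -/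
theorem esymm_shape_eigenvalues_eq (n : ℕ) (hn : 1 ≤ n)
    (A : EuclideanSpace ℝ (Fin n) →ₗ[ℝ] EuclideanSpace ℝ (Fin n))
    (hA : LinearMap.IsSymmetric A)
    (v : EuclideanSpace ℝ (Fin n)) (hv : v ≠ 0)
    (S : (Submodule.span ℝ {v})ᗮ →ₗ[ℝ] (Submodule.span ℝ {v})ᗮ)
    (hS : ∀ w : (Submodule.span ℝ {v})ᗮ,
      (S w : EuclideanSpace ℝ (Fin n))
        = (1 / ‖v‖) • (Submodule.orthogonalProjectionOnto (Submodule.span ℝ {v})ᗮ (A w) :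
            EuclideanSpace ℝ (Fin n)))
    (κ : Fin (n - 1) → ℝ)
    (b : OrthonormalBasis (Fin (n - 1)) ℝ (Submodule.span ℝ {v})ᗮ)
    (hb : ∀ i, S (b i) = κ i • b i)
    (r : ℕ) (hr : r ≤ n - 1) :
    ∑ s ∈ Finset.powersetCard r Finset.univ, ∏ i ∈ s, κ i
      = ⟪endoNewton n A r v, v⟫ / ‖v‖ ^ (r + 2) := by
  classical
  obtain ⟨m, rfl⟩ : ∃ m, n = m + 1 := ⟨n - 1, (Nat.succ_pred_eq_of_pos hn).symm⟩
  have hr' : r ≤ m := hr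
  have hvn : ‖v‖ ≠ 0 := norm_ne_zero_iff.mpr hv
  set u : EuclideanSpace ℝ (Fin (m+1)) := ‖v‖⁻¹ • v with hu_def
  have hvu : v = ‖v‖ • u := by rw [hu_def, smul_smul, mul_inv_cancel₀ hvn, one_smul]
  have hu_norm : ‖u‖ = 1 := by
    rw [hu_def, norm_smul, norm_inv, norm_norm, inv_mul_cancel₀ hvn]
  have huu : ⟪u, u⟫ = 1 := by
    rw [real_inner_self_eq_norm_mul_norm, hu_norm, one_mul]
  have hu_mem : u ∈ Submodule.span ℝ {v} :=
    Submodule.smul_mem _ _ (Submodule.mem_span_singleton_self v)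
  set B : Fin m → EuclideanSpace ℝ (Fin (m+1)) := fun i => ((b i : (Submodule.span ℝ {v})ᗮ) : _) with hB_def
  have hBmem : ∀ i, B i ∈ (Submodule.span ℝ {v})ᗮ := fun i => (b i).2
  have hBu : ∀ i, ⟪u, B i⟫ = 0 := fun i => (hBmem i) u hu_mem
  have hBu' : ∀ i, ⟪B i, u⟫ = 0 := fun i => by rw [real_inner_comm]; exact hBu i
  have hbb : ∀ i j, ⟪B i, B j⟫ = if i = j then 1 else 0 := by
    intro i j
    have := orthonormal_iff_ite.mp b.orthonormal i j
    rw [Submodule.coe_inner] at this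
    exact this
  -- the combined orthonormal basis
  set f : Unit ⊕ Fin m → EuclideanSpace ℝ (Fin (m+1)) := Sum.elim (fun _ => u) B with hf_def
  have hon : Orthonormal ℝ f := by
    rw [orthonormal_iff_ite]
    rintro (⟨⟩ | i) (⟨⟩ | j)
    · simpa [hf_def] using huu
    · simpa [hf_def] using hBu j
    · simpa [hf_def] using hBu' i
    · show ⟪B i, B j⟫ = _
      rw [hbb i j]
      simp [Sum.inr.injEq]
  have hsp : ⊤ ≤ Submodule.span ℝ (Set.range f) := by
    have h1 : Submodule.span ℝ {v} ≤ Submodule.span ℝ (Set.range f) := by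
      rw [Submodule.span_singleton_le_iff_mem, hvu]
      exact Submodule.smul_mem _ _ (Submodule.subset_span ⟨Sum.inl (), rfl⟩)
    have h2 : (Submodule.span ℝ {v})ᗮ ≤ Submodule.span ℝ (Set.range f) := by
      intro x hx
      have hrepr : ((∑ i, b.repr ⟨x, hx⟩ i • b i : (Submodule.span ℝ {v})ᗮ) : EuclideanSpace ℝ (Fin (m+1))) = x := by
        rw [b.sum_repr ⟨x, hx⟩]
      rw [← hrepr]
      rw [Submodule.coe_sum]
      refine Submodule.sum_mem _ fun i _ => ?_
      rw [Submodule.coe_smul]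
      exact Submodule.smul_mem _ _ (Submodule.subset_span ⟨Sum.inr i, rfl⟩)
    have htop : Submodule.span ℝ {v} ⊔ (Submodule.span ℝ {v})ᗮ = ⊤ := Submodule.sup_orthogonal_of_hasOrthogonalProjection
    rw [← htop]
    exact sup_le h1 h2
  set Eb : OrthonormalBasis (Unit ⊕ Fin m) ℝ (EuclideanSpace ℝ (Fin (m+1))) :=
    OrthonormalBasis.mk hon hsp with hEb_def
  have hEb : ∀ idx, Eb idx = f idx := fun idx => by
    rw [hEb_def, OrthonormalBasis.coe_mk]
  -- the scalars
  set a : ℝ := ⟪A u, u⟫ with ha_def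
  set c : Fin m → ℝ := fun i => ⟪A u, B i⟫ with hc_def
  set d : Fin m → ℝ := fun i => ‖v‖ * κ i with hd_def
  -- projection of A (B i)
  have hproj : ∀ i, ((Submodule.orthogonalProjectionOnto (Submodule.span ℝ {v})ᗮ (A (B i)) : EuclideanSpace ℝ (Fin (m+1))))
      = d i • B i := by
    intro i
    have h1 := hS (b i)
    have h2 : (S (b i) : EuclideanSpace ℝ (Fin (m+1))) = κ i • B i := by
      rw [hb i, Submodule.coe_smul, hB_def]
    calc ((Submodule.orthogonalProjectionOnto (Submodule.span ℝ {v})ᗮ (A (B i)) : EuclideanSpace ℝ (Fin (m+1))))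
        = ‖v‖ • ((1 / ‖v‖) •
            (Submodule.orthogonalProjectionOnto (Submodule.span ℝ {v})ᗮ (A (B i)) : EuclideanSpace ℝ (Fin (m+1)))) := by
          rw [smul_smul]
          field_simp
          rw [one_smul]
      _ = ‖v‖ • (S (b i) : EuclideanSpace ℝ (Fin (m+1))) := by rw [← h1]
      _ = d i • B i := by rw [h2, smul_smul, hd_def]
  have hABu : ∀ i, ⟪A (B i), u⟫ = c i := by
    intro i
    rw [hA (B i) u, real_inner_comm]
  have hABb : ∀ i j, ⟪A (B i), B j⟫ = if i = j then d i else 0 := by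
    intro i j
    have h0 := Submodule.inner_orthogonalProjectionOnto_eq_of_mem_right (K := (Submodule.span ℝ {v})ᗮ) (b j) (A (B i))
    rw [Submodule.coe_inner, hproj i] at h0
    rw [← h0, real_inner_smul_left, hbb i j]
    by_cases hij : i = j <;> simp [hij]
  -- vector expansions
  have hAu_exp : A u = a • u + ∑ i, c i • B i := by
    have h0 := Eb.sum_repr' (A u)
    rw [Fintype.sum_sum_type] at h0
    simp only [hEb, hf_def, Sum.elim_inl, Sum.elim_inr] at h0
    rw [← h0, Finset.sum_const, ha_def]
    congr 1
    · rw [real_inner_comm]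
      simp
    · exact Finset.sum_congr rfl fun i _ => by rw [real_inner_comm, hc_def]
  have hAB_exp : ∀ i, A (B i) = c i • u + d i • B i := by
    intro i
    have h0 := Eb.sum_repr' (A (B i))
    rw [Fintype.sum_sum_type] at h0
    simp only [hEb, hf_def, Sum.elim_inl, Sum.elim_inr] at h0
    rw [← h0, Finset.sum_const]
    congr 1
    · rw [real_inner_comm, hABu i]
      simp
    · have : ∀ j, ⟪B j, A (B i)⟫ • B j = (if i = j then d i else 0) • B j := fun j => by
        rw [real_inner_comm, hABb i j]
      rw [Finset.sum_congr rfl fun j _ => this j]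
      simp [ite_smul, Finset.sum_ite_eq]
  -- the matrix of A
  have hM : LinearMap.toMatrix Eb.toBasis Eb.toBasis A
      = Matrix.fromBlocks (Matrix.of fun _ _ : Unit => a) (Matrix.of fun _ j => c j)
        (Matrix.of fun i _ => c i) (Matrix.diagonal d) := by
    ext i j
    rw [LinearMap.toMatrix_apply, Eb.coe_toBasis_repr_apply, Eb.repr_apply_apply]
    have he : Eb.toBasis j = f j := by
      have := congrFun (congrArg (fun (g : _ → _) => g) Eb.coe_toBasis) j
      simpa [hEb] using this
    rw [he, hEb]
    rcases i with i0 | i <;> rcases j with j0 | j <;>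
      simp only [hf_def, Sum.elim_inl, Sum.elim_inr, Matrix.fromBlocks_apply₁₁,
        Matrix.fromBlocks_apply₁₂, Matrix.fromBlocks_apply₂₁, Matrix.fromBlocks_apply₂₂,
        Matrix.of_apply, Matrix.diagonal_apply]
    · rw [real_inner_comm]
    · rw [real_inner_comm]
      exact hABu j
    · rw [real_inner_comm]
    · rw [real_inner_comm, hABb j i]
      rcases eq_or_ne i j with hij | hij
      · simp [hij]
      · simp [hij, (Ne.symm hij : ¬ j = i)]
  -- the characteristic polynomial
  have hp : LinearMap.charpoly A = (X - C a) * ∏ i, (X - C (d i))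
      - ∑ i, C (c i ^ 2) * ∏ j ∈ Finset.univ.erase i, (X - C (d j)) := by
    rw [← LinearMap.charpoly_toMatrix A Eb.toBasis, hM, arrowhead_charpoly]
  have hσ1' : 1 ≤ m → endoSigma (m+1) A 1 = esymmOn Finset.univ d 1 + a := by
    intro h
    show (-1 : ℝ) ^ (1:ℕ) * (LinearMap.charpoly A).coeff (m + 1 - 1)
      = esymmOn Finset.univ d 1 + a
    rw [hp]
    exact sigma1_coeff a c d h
  have hσ2' : ∀ s, s + 2 ≤ m → endoSigma (m+1) A (s+2) = esymmOn Finset.univ d (s + 2)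
      + a * esymmOn Finset.univ d (s + 1)
      - ∑ i, c i ^ 2 * esymmOn (Finset.univ.erase i) d s := by
    intro s h
    show (-1 : ℝ) ^ (s+2) * (LinearMap.charpoly A).coeff (m + 1 - (s+2)) = _
    rw [hp]
    exact sigma2_coeff a c d s h
  -- the scalar recursions
  have hx0 : ⟪endoNewton (m+1) A 0 u, u⟫ = 1 := huu
  have hy0 : ∀ i, ⟪endoNewton (m+1) A 0 (B i), u⟫ = 0 := fun i => hBu' i
  have hxrec : ∀ r', ⟪endoNewton (m+1) A (r'+1) u, u⟫
      = endoSigma (m+1) A (r'+1)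
        - (a * ⟪endoNewton (m+1) A r' u, u⟫
          + ∑ i, c i * ⟪endoNewton (m+1) A r' (B i), u⟫) := by
    intro r'
    have hTu : endoNewton (m+1) A (r'+1) u
        = endoSigma (m+1) A (r'+1) • u - endoNewton (m+1) A r' (A u) := rfl
    rw [hTu, inner_sub_left, real_inner_smul_left, huu, mul_one, hAu_exp, map_add,
      _root_.map_smul, map_sum, inner_add_left, real_inner_smul_left, sum_inner]
    simp only [_root_.map_smul, real_inner_smul_left, smul_eq_mul]
  have hyrec : ∀ r' i, ⟪endoNewton (m+1) A (r'+1) (B i), u⟫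
      = -(c i * ⟪endoNewton (m+1) A r' u, u⟫
          + d i * ⟪endoNewton (m+1) A r' (B i), u⟫) := by
    intro r' i
    have hTb : endoNewton (m+1) A (r'+1) (B i)
        = endoSigma (m+1) A (r'+1) • (B i) - endoNewton (m+1) A r' (A (B i)) := rfl
    have e1 : (endoNewton (m+1) A r') (c i • u) = c i • (endoNewton (m+1) A r') u :=
      _root_.map_smul _ _ _
    have e2 : (endoNewton (m+1) A r') (d i • B i) = d i • (endoNewton (m+1) A r') (B i) :=
      _root_.map_smul _ _ _
    rw [hTb, inner_sub_left, real_inner_smul_left, hBu' i, mul_zero, hAB_exp i, map_add,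
      e1, e2, inner_add_left, real_inner_smul_left, real_inner_smul_left]
    ring
  have key := newton_core a c d (endoSigma (m+1) A)
    (fun r' => ⟪endoNewton (m+1) A r' u, u⟫)
    (fun r' i => ⟪endoNewton (m+1) A r' (B i), u⟫)
    hx0 hy0 hxrec hyrec hσ1' hσ2'
  obtain ⟨hxr, -⟩ := key r hr'
  -- conclusion
  have hTv : ⟪endoNewton (m+1) A r v, v⟫ = ‖v‖ ^ 2 * esymmOn Finset.univ d r := by
    conv_lhs => rw [hvu]
    rw [_root_.map_smul, real_inner_smul_left, real_inner_smul_right,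
      show (⟪endoNewton (m+1) A r u, u⟫ : ℝ) = esymmOn Finset.univ d r from hxr]
    ring
  have hesymm : esymmOn Finset.univ d r
      = ‖v‖ ^ r * ∑ s ∈ Finset.powersetCard r Finset.univ, ∏ i ∈ s, κ i := by
    rw [esymmOn, Finset.mul_sum]
    refine Finset.sum_congr rfl fun s hs => ?_
    have hcard : s.card = r := (Finset.mem_powersetCard.mp hs).2
    rw [hd_def]
    rw [Finset.prod_mul_distrib, Finset.prod_const, hcard]
    rfl
  rw [hTv, hesymm]
  rw [eq_div_iff (pow_ne_zero _ hvn)]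
  ring
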